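/- Let (Ω, P) be a probability space, p ∈ (0,1), c > 0, H = 1/2, and let (ξ_i)_{i≥1} be a sequence of random variables taking values in {0,1} almost surely with P(ξ_i = 1) = p for all i and P(ξ_i = 1, ξ_j = 1) = p(p + c|i − j|^{2H−2}) = p(p + c/|i−j|) for all i ≠ j. Then Var(ξ_1 + ⋯ + ξ_N)/(N·ln N) → 2·p·c as N → ∞. -/

import Mathlib

/-!
For `{0,1}`-valued variables the covariance is read off the one- and two-point probabilities:
`cov(ξ_i, ξ_j)` is `p(1-p)` on the diagonal and `pc/|i-j|` off it. Row `i` of `1/|i-j|` left of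
the diagonal sums to the harmonic number `H_i`, so
`Var B_N = N p(1-p) + 2pc ∑_{k<N} H_k = N p(1-p) + 2pc (N H_N - N)`, and `H_N ~ log N`.
-/

open MeasureTheory ProbabilityTheory Filter Finset Topology

lemma sum_range_harmonic (n : ℕ) : ∑ j ∈ range n, harmonic j = n * harmonic n - n := by
  induction n with
  | zero => simp
  | succ n ih =>
    rw [sum_range_succ, ih, harmonic_succ]
    push_cast
    field_simp
    ring

lemma sum_range_inv_natCast_sub (n : ℕ) : ∑ j ∈ range n, ((n : ℝ) - j)⁻¹ = harmonic n := by
  rw [harmonic, ← sum_range_reflect]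
  push_cast
  refine sum_congr rfl fun j hj => ?_
  rw [mem_range] at hj
  rw [Nat.cast_sub (by omega), Nat.cast_sub (by omega)]
  push_cast
  ring_nf

lemma sum_range_sum_range_inv_abs_sub (N : ℕ) :
    ∑ i ∈ range N, ∑ j ∈ range N, (if i = j then 0 else |(i : ℝ) - j|⁻¹) =
      2 * (N * harmonic N - N) := by
  have hrow : ∀ n : ℕ, ∑ j ∈ range n, (if n = j then 0 else |(n : ℝ) - j|⁻¹) = harmonic n := by
    intro n
    rw [← sum_range_inv_natCast_sub]
    refine sum_congr rfl fun j hj => ?_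
    have hjn : (j : ℝ) < n := by exact_mod_cast mem_range.mp hj
    rw [if_neg (mem_range.mp hj).ne', abs_of_pos (sub_pos.mpr hjn)]
  have hsymm : ∀ i j : ℕ, (if i = j then 0 else |(i : ℝ) - j|⁻¹) =
      if j = i then 0 else |(j : ℝ) - i|⁻¹ := by
    intro i j
    rw [abs_sub_comm]
    simp only [eq_comm]
  suffices ∑ i ∈ range N, ∑ j ∈ range N, (if i = j then 0 else |(i : ℝ) - j|⁻¹) =
      2 * ∑ j ∈ range N, (harmonic j : ℝ) by
    rw [this]
    exact_mod_cast congrArg (fun q : ℚ => 2 * (q : ℝ)) (sum_range_harmonic N)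
  induction N with
  | zero => simp
  | succ n ih =>
    simp only [sum_range_succ, sum_add_distrib, ih, hrow]
    rw [sum_congr rfl fun i _ => hsymm i n, hrow]
    simp only [if_true]
    ring

section ZeroOne

variable {Ω : Type*} [MeasurableSpace Ω] {μ : Measure Ω} {X Y : Ω → ℝ}

lemma ae_eq_indicator_one_of_ae_zero_or_one (hX : ∀ᵐ ω ∂μ, X ω = 0 ∨ X ω = 1) :
    X =ᵐ[μ] {ω | X ω = 1}.indicator 1 := by
  filter_upwards [hX] with ω hω
  rcases hω with h | h <;> simp [Set.indicator, h]

lemma memLp_of_ae_zero_or_one [IsFiniteMeasure μ] (hXm : Measurable X)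
    (hX : ∀ᵐ ω ∂μ, X ω = 0 ∨ X ω = 1) (q : ENNReal) : MemLp X q μ := by
  refine MemLp.of_bound hXm.aestronglyMeasurable 1 ?_
  filter_upwards [hX] with ω hω
  rcases hω with h | h <;> simp [h]

lemma integral_mul_of_ae_zero_or_one (hXm : Measurable X) (hYm : Measurable Y)
    (hX : ∀ᵐ ω ∂μ, X ω = 0 ∨ X ω = 1) (hY : ∀ᵐ ω ∂μ, Y ω = 0 ∨ Y ω = 1) :
    μ[X * Y] = μ.real ({ω | X ω = 1} ∩ {ω | Y ω = 1}) := by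
  have hmeas : MeasurableSet ({ω | X ω = 1} ∩ {ω | Y ω = 1}) :=
    (hXm (measurableSet_singleton 1)).inter (hYm (measurableSet_singleton 1))
  rw [← integral_indicator_one hmeas, Set.inter_indicator_one]
  exact integral_congr_ae ((ae_eq_indicator_one_of_ae_zero_or_one hX).mul
    (ae_eq_indicator_one_of_ae_zero_or_one hY))

lemma integral_of_ae_zero_or_one (hXm : Measurable X) (hX : ∀ᵐ ω ∂μ, X ω = 0 ∨ X ω = 1) :
    μ[X] = μ.real {ω | X ω = 1} := by
  rw [← integral_indicator_one (s := {ω | X ω = 1}) (hXm (measurableSet_singleton 1))]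
  exact integral_congr_ae (ae_eq_indicator_one_of_ae_zero_or_one hX)

lemma covariance_of_ae_zero_or_one [IsProbabilityMeasure μ] (hXm : Measurable X)
    (hYm : Measurable Y) (hX : ∀ᵐ ω ∂μ, X ω = 0 ∨ X ω = 1) (hY : ∀ᵐ ω ∂μ, Y ω = 0 ∨ Y ω = 1) :
    cov[X, Y; μ] = μ.real ({ω | X ω = 1} ∩ {ω | Y ω = 1}) -
      μ.real {ω | X ω = 1} * μ.real {ω | Y ω = 1} := by
  rw [covariance_eq_sub (memLp_of_ae_zero_or_one hXm hX 2) (memLp_of_ae_zero_or_one hYm hY 2),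
    integral_mul_of_ae_zero_or_one hXm hYm hX hY, integral_of_ae_zero_or_one hXm hX,
    integral_of_ae_zero_or_one hYm hY]

end ZeroOne

lemma tendsto_inv_log_natCast_atTop :
    Tendsto (fun n : ℕ => (Real.log n)⁻¹) atTop (𝓝 0) :=
  (Real.tendsto_log_atTop.comp tendsto_natCast_atTop_atTop).inv_tendsto_atTop

lemma tendsto_harmonic_div_log :
    Tendsto (fun n : ℕ => (harmonic n : ℝ) / Real.log n) atTop (𝓝 1) := by
  have := (Real.tendsto_harmonic_sub_log.mul tendsto_inv_log_natCast_atTop).add_const 1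
  rw [mul_zero, zero_add] at this
  refine this.congr' ?_
  filter_upwards [eventually_gt_atTop 1] with n hn
  have : Real.log n ≠ 0 := (Real.log_pos (by exact_mod_cast hn)).ne'
  field_simp
  ring

lemma tendsto_mul_add_mul_harmonic_div_mul_log (v a : ℝ) :
    Tendsto (fun N : ℕ => (N * v + 2 * a * (N * harmonic N - N)) / (N * Real.log N))
      atTop (𝓝 (2 * a)) := by
  have := ((tendsto_harmonic_div_log.const_mul (2 * a)).add (tendsto_inv_log_natCast_atTop.const_mul (v - 2 * a)))
  rw [mul_zero, add_zero, mul_one] at this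
  refine this.congr' ?_
  filter_upwards [eventually_gt_atTop 1] with n hn
  have : Real.log n ≠ 0 := (Real.log_pos (by exact_mod_cast hn)).ne'
  have : (n : ℝ) ≠ 0 := by positivity
  field_simp
  ring

lemma variance_sum_range_of_covariance_eq_div_abs_sub {Ω : Type*} [MeasurableSpace Ω]
    {μ : Measure Ω} [IsFiniteMeasure μ] {X : ℕ → Ω → ℝ} (hX : ∀ i, MemLp (X i) 2 μ) {v a : ℝ}
    (hcov : ∀ i j, cov[X i, X j; μ] = if i = j then v else a / |(i : ℝ) - j|) (N : ℕ) :
    Var[fun ω => ∑ i ∈ range N, X i ω; μ] = N * v + 2 * a * (N * harmonic N - N) := by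
  have hsplit : ∀ i j : ℕ, (if i = j then v else a / |(i : ℝ) - j|) =
      (if i = j then v else 0) + a * (if i = j then 0 else |(i : ℝ) - j|⁻¹) := by
    intro i j
    split_ifs <;> simp [div_eq_mul_inv]
  rw [variance_fun_sum' fun i _ => hX i]
  simp_rw [hcov, hsplit, sum_add_distrib, ← mul_sum, sum_range_sum_range_inv_abs_sub,
    sum_ite_eq, sum_ite_mem, inter_self, sum_const, card_range, nsmul_eq_mul]
  ring

theorem gbp_variance_asymptotics_half_general {Ω : Type*} [MeasurableSpace Ω] (P : Measure Ω)
    [IsProbabilityMeasure P] (p c : ℝ) (hp0 : 0 < p) (hc : 0 < c)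
    (ξ : ℕ → Ω → ℝ) (hm : ∀ i, Measurable (ξ i))
    (h01 : ∀ i, ∀ᵐ ω ∂P, ξ i ω = 0 ∨ ξ i ω = 1)
    (hP1 : ∀ i, P {ω | ξ i ω = 1} = ENNReal.ofReal p)
    (hP2 : ∀ i j, i ≠ j → P ({ω | ξ i ω = 1} ∩ {ω | ξ j ω = 1}) =
      ENNReal.ofReal (p * (p + c / |(i : ℝ) - (j : ℝ)|))) :
    Tendsto
      (fun N : ℕ =>
        variance (fun ω => ∑ i ∈ Finset.range N, ξ i ω) P / ((N : ℝ) * Real.log N))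
      atTop (nhds (2 * p * c)) := by
  have hcov : ∀ i j, cov[ξ i, ξ j; P] = if i = j then p * (1 - p) else p * c / |(i : ℝ) - j| := by
    intro i j
    rw [covariance_of_ae_zero_or_one (hm i) (hm j) (h01 i) (h01 j)]
    simp only [measureReal_def, hP1, ENNReal.toReal_ofReal hp0.le]
    split_ifs with hij
    · rw [hij, Set.inter_self, hP1, ENNReal.toReal_ofReal hp0.le]
      ring
    · rw [hP2 i j hij, ENNReal.toReal_ofReal (by positivity)]
      ring
  rw [mul_assoc]
  simpa only [variance_sum_range_of_covariance_eq_div_abs_sub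
    (fun i => memLp_of_ae_zero_or_one (hm i) (h01 i) 2) hcov]
    using tendsto_mul_add_mul_harmonic_div_mul_log (p * (1 - p)) (p * c)

/-- For a GBP with `p ∈ (0,1)`, `c > 0` and `H = 1/2` (so that the pairwise joint
probabilities are `p(p + c/|i−j|)`), the variance of `B_N = ξ_1 + ⋯ + ξ_N`
satisfies `Var(B_N)/(N·ln N) → 2·p·c` as `N → ∞`. -/
theorem gbp_variance_asymptotics_half {Ω : Type*} [MeasurableSpace Ω] (P : Measure Ω)
    [IsProbabilityMeasure P] (p c : ℝ) (hp0 : 0 < p) (hp1 : p < 1) (hc : 0 < c)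
    (ξ : ℕ → Ω → ℝ) (hm : ∀ i, Measurable (ξ i))
    (h01 : ∀ i, ∀ᵐ ω ∂P, ξ i ω = 0 ∨ ξ i ω = 1)
    (hP1 : ∀ i, P {ω | ξ i ω = 1} = ENNReal.ofReal p)
    (hP2 : ∀ i j, i ≠ j → P ({ω | ξ i ω = 1} ∩ {ω | ξ j ω = 1}) =
      ENNReal.ofReal (p * (p + c / |(i : ℝ) - (j : ℝ)|))) :
    Tendsto
      (fun N : ℕ =>
        variance (fun ω => ∑ i ∈ Finset.range N, ξ i ω) P / ((N : ℝ) * Real.log N))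
      atTop (nhds (2 * p * c)) :=
  gbp_variance_asymptotics_half_general P p c hp0 hc ξ hm h01 hP1 hP2
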